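/- Let ω ∈ ℝ^n and λ_j ∈ ℂ (j ∈ ℤ^d) satisfy the Melnikov conditions |i ω·l + λ_j - λ_{j'}| ≥ γ/(⟨l⟩^τ ⟨j⟩^τ ⟨j'⟩^τ) for all (l,j,j') ≠ (0,j,j) with |l|, |j-j'| ≤ N. Let P be given by Fourier-matrix coefficients P̂(l)_j^{j'} with finite norm ‖P‖² := ∑_{l} ⟨l⟩^{2s} ∑_{j,j'} ⟨j⟩^{2(σ+m)} |P̂(l)_j^{j'}|² ⟨j'⟩^{-2(σ-m)} where m > 2τ. Define X̂(l)_j^{j'} := P̂(l)_j^{j'}/(i ω·l + λ_j - λ_{j'}) for 0 < |j-j'| < N or 0 < |l| < N (and zero otherwise, diagonal l=0, j=j' entries zero). Then ∑_l ⟨l⟩^{2s} ∑_{j,j'} ⟨j⟩^{2(σ+m)} |X̂(l)_j^{j'}|² ⟨j'⟩^{-2(σ+m)} ≤ C γ^{-2} N^{4τ} ‖P‖², i.e. ‖X‖_{M^s_{σ+m,σ+m}} ≤ C γ^{-1} N^{2τ} ‖P‖_{M^s_{σ-m,σ+m}}. -/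
import Mathlib


noncomputable section
open Classical

/-- Japanese bracket ⟨x⟩ = (1 + |x|²)^{1/2}. -/
def jp (m : ℕ) (x : Fin m → ℤ) : ℝ := Real.sqrt (1 + ∑ i, ((x i : ℝ))^2)

/-- Euclidean norm of an integer vector. -/
def en (m : ℕ) (x : Fin m → ℤ) : ℝ := Real.sqrt (∑ i, ((x i : ℝ))^2)

/-- The small divisor i ω·l + λ_j - λ_{j'}. -/
def divisor (n d : ℕ) (ω : Fin n → ℝ) (lam : (Fin d → ℤ) → ℂ)
    (l : Fin n → ℤ) (j j' : Fin d → ℤ) : ℂ :=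
  Complex.I * ((∑ i, ω i * (l i : ℝ) : ℝ) : ℂ) + lam j - lam j'

/-- The solution of the homological equation: P̂(l)_j^{j'} divided by the small
divisor on the truncated, non-diagonal region, zero otherwise. -/
def homSol (n d : ℕ) (N : ℝ) (ω : Fin n → ℝ) (lam : (Fin d → ℤ) → ℂ)
    (P : (Fin n → ℤ) → (Fin d → ℤ) → (Fin d → ℤ) → ℂ)
    (l : Fin n → ℤ) (j j' : Fin d → ℤ) : ℂ :=
  if ¬(l = 0 ∧ j = j') ∧ en n l < N ∧ en d (j - j') < N then
    P l j j' / divisor n d ω lam l j j' else 0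

lemma jp_one_le (m : ℕ) (x : Fin m → ℤ) : 1 ≤ jp m x := by
  have h : (1:ℝ) ≤ 1 + ∑ i, ((x i : ℝ))^2 := by
    have : (0:ℝ) ≤ ∑ i, ((x i : ℝ))^2 := by positivity
    linarith
  calc (1:ℝ) = Real.sqrt 1 := Real.sqrt_one.symm
  _ ≤ jp m x := Real.sqrt_le_sqrt h

lemma jp_pos (m : ℕ) (x : Fin m → ℤ) : 0 < jp m x :=
  lt_of_lt_of_le one_pos (jp_one_le m x)

lemma jp_sq (m : ℕ) (x : Fin m → ℤ) : jp m x ^ 2 = 1 + ∑ i, ((x i : ℝ))^2 :=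
  Real.sq_sqrt (by positivity)

lemma en_sq (m : ℕ) (x : Fin m → ℤ) : en m x ^ 2 = ∑ i, ((x i : ℝ))^2 :=
  Real.sq_sqrt (by positivity)

lemma en_nonneg (m : ℕ) (x : Fin m → ℤ) : 0 ≤ en m x := Real.sqrt_nonneg _

lemma jp_le_of_en_lt {m : ℕ} {x : Fin m → ℤ} {N : ℝ} (hN : 1 ≤ N)
    (h : en m x < N) : jp m x ≤ 2 * N := by
  have h2 : 1 + ∑ i, ((x i : ℝ))^2 ≤ (2*N)^2 := by
    have := en_sq m x
    nlinarith [en_nonneg m x, en_sq m x]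
  calc jp m x ≤ Real.sqrt ((2*N)^2) := Real.sqrt_le_sqrt h2
  _ = 2*N := Real.sqrt_sq (by linarith)

lemma jp_triangle (m : ℕ) (j j' : Fin m → ℤ) :
    jp m j ≤ 2 * (jp m (j - j') * jp m j') := by
  have hA : (0:ℝ) ≤ ∑ i, (((j-j') i : ℝ))^2 := by positivity
  have hB : (0:ℝ) ≤ ∑ i, ((j' i : ℝ))^2 := by positivity
  have hsum : ∑ i, ((j i : ℝ))^2
      ≤ 2 * ((∑ i, (((j-j') i : ℝ))^2) + ∑ i, ((j' i : ℝ))^2) := by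
    rw [← Finset.sum_add_distrib, Finset.mul_sum]
    apply Finset.sum_le_sum
    intro i _
    have : ((j i : ℝ)) = ((j-j') i : ℝ) + (j' i : ℝ) := by
      simp [Pi.sub_apply]
    rw [this]
    nlinarith [sq_nonneg (((j-j') i : ℝ) - (j' i : ℝ))]
  have key : 1 + ∑ i, ((j i : ℝ))^2
      ≤ (2 * (jp m (j - j') * jp m j'))^2 := by
    have e1 := jp_sq m (j - j')
    have e2 := jp_sq m j'
    have : (2 * (jp m (j - j') * jp m j'))^2
        = 4 * ((1 + ∑ i, (((j-j') i : ℝ))^2) * (1 + ∑ i, ((j' i : ℝ))^2)) := by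
      rw [mul_pow, mul_pow, e1, e2]; ring
    rw [this]
    nlinarith
  calc jp m j ≤ Real.sqrt ((2 * (jp m (j - j') * jp m j'))^2) :=
        Real.sqrt_le_sqrt key
  _ = 2 * (jp m (j - j') * jp m j') :=
    Real.sqrt_sq (by have h1 := jp_pos m (j - j'); have h2 := jp_pos m j'; positivity)

lemma sq_rpow (x p : ℝ) (hx : 0 ≤ x) : (x ^ p) ^ (2:ℕ) = x ^ (2*p) := by
  rw [← Real.rpow_natCast (x^p) 2, ← Real.rpow_mul hx]
  norm_num [mul_comm]

lemma key_pointwise (n d : ℕ) (τ s σ m γ : ℝ)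
    (hγ : 0 < γ) (hτ : 0 < τ) (hm : 2 * τ < m)
    (N : ℝ) (hN : 1 ≤ N) (ω : Fin n → ℝ) (lam : (Fin d → ℤ) → ℂ)
    (P : (Fin n → ℤ) → (Fin d → ℤ) → (Fin d → ℤ) → ℂ)
    (hMel : ∀ (l : Fin n → ℤ) (j j' : Fin d → ℤ), ¬(l = 0 ∧ j = j') →
        en n l ≤ N → en d (j - j') ≤ N →
        γ / (jp n l ^ τ * jp d j ^ τ * jp d j' ^ τ)
          ≤ ‖divisor n d ω lam l j j'‖)
    (l : Fin n → ℤ) (j j' : Fin d → ℤ) :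
    jp n l ^ (2 * s) * jp d j ^ (2 * (σ + m)) *
        ‖homSol n d N ω lam P l j j'‖ ^ 2 * jp d j' ^ (-(2 * (σ + m)))
      ≤ (64:ℝ) ^ τ * γ ^ (-(2 : ℝ)) * N ^ (4 * τ) *
        (jp n l ^ (2 * s) * jp d j ^ (2 * (σ + m)) *
          ‖P l j j'‖ ^ 2 * jp d j' ^ (-(2 * (σ - m)))) := by
  have hNpos : (0:ℝ) < N := lt_of_lt_of_le one_pos hN
  have hal := jp_pos n l
  have haj := jp_pos d j
  have haj' := jp_pos d j'
  rw [homSol]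
  split_ifs with hcond
  · obtain ⟨h1, h2, h3⟩ := hcond
    have hD := hMel l j j' h1 h2.le h3.le
    set a := jp n l
    set b := jp d j
    set c := jp d j'
    set q := jp d (j - j')
    have hqpos := jp_pos d (j - j')
    have hMpos : 0 < a ^ τ * b ^ τ * c ^ τ := by positivity
    have hDpos : 0 < ‖divisor n d ω lam l j j'‖ :=
      lt_of_lt_of_le (by positivity) hD
    -- bound on norm of the solution
    have hXle : ‖P l j j' / divisor n d ω lam l j j'‖
        ≤ ‖P l j j'‖ * ((8:ℝ) ^ τ * N ^ (2*τ) * c ^ (2*τ)) / γ := by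
      rw [norm_div]
      have step1 : ‖P l j j'‖ / ‖divisor n d ω lam l j j'‖
          ≤ ‖P l j j'‖ / (γ / (a ^ τ * b ^ τ * c ^ τ)) :=
        div_le_div_of_nonneg_left (norm_nonneg _) (by positivity) hD
      have step2 : ‖P l j j'‖ / (γ / (a ^ τ * b ^ τ * c ^ τ))
          = ‖P l j j'‖ * (a ^ τ * b ^ τ * c ^ τ) / γ := by
        field_simp
      have hM : a ^ τ * b ^ τ * c ^ τ ≤ (8:ℝ) ^ τ * N ^ (2*τ) * c ^ (2*τ) := by
        have ha : a ≤ 2 * N := jp_le_of_en_lt hN h2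
        have hq : q ≤ 2 * N := jp_le_of_en_lt hN h3
        have hb : b ≤ 2 * ((2*N) * c) := by
          calc b ≤ 2 * (q * c) := jp_triangle d j j'
          _ ≤ 2 * ((2*N) * c) := by nlinarith
        have hat : a ^ τ ≤ (2*N) ^ τ :=
          Real.rpow_le_rpow hal.le ha hτ.le
        have hbt : b ^ τ ≤ (4*N*c) ^ τ :=
          Real.rpow_le_rpow haj.le (by linarith) hτ.le
        calc a ^ τ * b ^ τ * c ^ τ ≤ (2*N) ^ τ * (4*N*c) ^ τ * c ^ τ := by
              have h4 : (0:ℝ) ≤ (2*N) ^ τ := by positivity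
              have h5 : (0:ℝ) ≤ c ^ τ := by positivity
              have h6 : (0:ℝ) ≤ b ^ τ := by positivity
              have h7 : (0:ℝ) ≤ a ^ τ := by positivity
              exact mul_le_mul_of_nonneg_right
                (mul_le_mul hat hbt h6 h4) h5
        _ = (8:ℝ) ^ τ * N ^ (2*τ) * c ^ (2*τ) := by
              rw [Real.mul_rpow (by norm_num) hNpos.le,
                Real.mul_rpow (by positivity) haj'.le,
                Real.mul_rpow (by norm_num) hNpos.le]
              rw [show (2:ℝ)*τ = τ + τ by ring, Real.rpow_add hNpos,
                Real.rpow_add haj']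
              ring_nf
              rw [show (8:ℝ) = 2 * 4 by norm_num,
                Real.mul_rpow (by norm_num) (by norm_num)]
              ring
      calc ‖P l j j'‖ / ‖divisor n d ω lam l j j'‖
          ≤ ‖P l j j'‖ * (a ^ τ * b ^ τ * c ^ τ) / γ := step1.trans_eq step2
      _ ≤ ‖P l j j'‖ * ((8:ℝ) ^ τ * N ^ (2*τ) * c ^ (2*τ)) / γ := by
          gcongr
    -- square it
    have hX2 : ‖P l j j' / divisor n d ω lam l j j'‖ ^ 2
        ≤ γ ^ (-(2:ℝ)) * (64:ℝ) ^ τ * N ^ (4*τ) * c ^ (4*τ) * ‖P l j j'‖ ^ 2 := by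
      have hsq : ‖P l j j' / divisor n d ω lam l j j'‖ ^ 2
          ≤ (‖P l j j'‖ * ((8:ℝ) ^ τ * N ^ (2*τ) * c ^ (2*τ)) / γ) ^ 2 :=
        pow_le_pow_left₀ (norm_nonneg _) hXle 2
      refine hsq.trans_eq ?_
      have e8 : ((8:ℝ)) ^ (2:ℝ) = (64:ℝ) := by
        rw [show (2:ℝ) = ((2:ℕ):ℝ) by norm_num, Real.rpow_natCast]; norm_num
      have e1 : (((8:ℝ) ^ τ) : ℝ) ^ (2:ℕ) = (64:ℝ) ^ τ := by
        rw [sq_rpow _ _ (by norm_num : (0:ℝ) ≤ 8),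
          Real.rpow_mul (by norm_num : (0:ℝ) ≤ 8), e8]
      have e2 : ((N ^ (2*τ)) : ℝ) ^ (2:ℕ) = N ^ (4*τ) := by
        rw [sq_rpow _ _ hNpos.le, show (2:ℝ)*(2*τ) = 4*τ by ring]
      have e3 : ((c ^ (2*τ)) : ℝ) ^ (2:ℕ) = c ^ (4*τ) := by
        rw [sq_rpow _ _ haj'.le, show (2:ℝ)*(2*τ) = 4*τ by ring]
      have e4 : γ ^ (-(2:ℝ)) = (γ ^ (2:ℕ))⁻¹ := by
        rw [Real.rpow_neg hγ.le, show (2:ℝ) = ((2:ℕ):ℝ) by norm_num,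
          Real.rpow_natCast]
      rw [div_pow, mul_pow, mul_pow, mul_pow, e1, e2, e3, e4]
      ring
    -- conclude
    have hexp : c ^ (4*τ) * c ^ (-(2*(σ+m))) ≤ c ^ (-(2*(σ-m))) := by
      rw [← Real.rpow_add haj']
      exact Real.rpow_le_rpow_of_exponent_le (jp_one_le d j') (by linarith)
    calc a ^ (2*s) * b ^ (2*(σ+m)) * ‖P l j j' / divisor n d ω lam l j j'‖ ^ 2
          * c ^ (-(2*(σ+m)))
        ≤ a ^ (2*s) * b ^ (2*(σ+m)) *
            (γ ^ (-(2:ℝ)) * (64:ℝ) ^ τ * N ^ (4*τ) * c ^ (4*τ) * ‖P l j j'‖ ^ 2)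
            * c ^ (-(2*(σ+m))) := by
          have hnn1 : (0:ℝ) ≤ a ^ (2*s) * b ^ (2*(σ+m)) := by positivity
          have hnn2 : (0:ℝ) ≤ c ^ (-(2*(σ+m))) := by positivity
          exact mul_le_mul_of_nonneg_right
            (mul_le_mul_of_nonneg_left hX2 hnn1) hnn2
    _ = ((64:ℝ) ^ τ * γ ^ (-(2:ℝ)) * N ^ (4*τ)) *
          (a ^ (2*s) * b ^ (2*(σ+m)) * ‖P l j j'‖ ^ 2) *
          (c ^ (4*τ) * c ^ (-(2*(σ+m)))) := by ring
    _ ≤ ((64:ℝ) ^ τ * γ ^ (-(2:ℝ)) * N ^ (4*τ)) *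
          (a ^ (2*s) * b ^ (2*(σ+m)) * ‖P l j j'‖ ^ 2) * (c ^ (-(2*(σ-m)))) := by
          have hnn : (0:ℝ) ≤ ((64:ℝ) ^ τ * γ ^ (-(2:ℝ)) * N ^ (4*τ)) *
              (a ^ (2*s) * b ^ (2*(σ+m)) * ‖P l j j'‖ ^ 2) := by positivity
          exact mul_le_mul_of_nonneg_left hexp hnn
    _ = (64:ℝ) ^ τ * γ ^ (-(2:ℝ)) * N ^ (4*τ) *
          (a ^ (2*s) * b ^ (2*(σ+m)) * ‖P l j j'‖ ^ 2 * c ^ (-(2*(σ-m)))) := by ring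
  · simp only [norm_zero]
    have : jp n l ^ (2*s) * jp d j ^ (2*(σ+m)) * (0:ℝ) ^ 2 * jp d j' ^ (-(2*(σ+m))) = 0 := by
      ring
    rw [this]
    positivity

/-- quantitative solvability of the KAM homological equation.
Under second Melnikov conditions up to scale N, the solution X satisfies
‖X‖²_{M^s_{σ+m,σ+m}} ≤ C γ⁻² N^{4τ} ‖P‖²_{M^s_{σ-m,σ+m}}, with C depending
only on the fixed parameters (not on N, ω, λ, P). -/
theorem stmt_15 (n d : ℕ) (τ s σ m γ : ℝ)
    (hγ : 0 < γ) (hγ1 : γ < 1) (hτ : 0 < τ) (hs : 0 ≤ s) (hσ : 0 ≤ σ)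
    (hm : 2 * τ < m) :
    ∃ C : ℝ, 0 < C ∧
      ∀ (N : ℝ), 1 ≤ N → ∀ (ω : Fin n → ℝ) (lam : (Fin d → ℤ) → ℂ)
        (P : (Fin n → ℤ) → (Fin d → ℤ) → (Fin d → ℤ) → ℂ),
      (∀ (l : Fin n → ℤ) (j j' : Fin d → ℤ), ¬(l = 0 ∧ j = j') →
        en n l ≤ N → en d (j - j') ≤ N →
        γ / (jp n l ^ τ * jp d j ^ τ * jp d j' ^ τ)
          ≤ ‖divisor n d ω lam l j j'‖) →
      Summable (fun p : (Fin n → ℤ) × (Fin d → ℤ) × (Fin d → ℤ) =>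
        jp n p.1 ^ (2 * s) * jp d p.2.1 ^ (2 * (σ + m)) * ‖P p.1 p.2.1 p.2.2‖ ^ 2 *
          jp d p.2.2 ^ (-(2 * (σ - m)))) →
      (∑' p : (Fin n → ℤ) × (Fin d → ℤ) × (Fin d → ℤ),
          jp n p.1 ^ (2 * s) * jp d p.2.1 ^ (2 * (σ + m)) *
            ‖homSol n d N ω lam P p.1 p.2.1 p.2.2‖ ^ 2 *
            jp d p.2.2 ^ (-(2 * (σ + m))))
        ≤ C * γ ^ (-(2 : ℝ)) * N ^ (4 * τ) *
          ∑' p : (Fin n → ℤ) × (Fin d → ℤ) × (Fin d → ℤ),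
            jp n p.1 ^ (2 * s) * jp d p.2.1 ^ (2 * (σ + m)) *
              ‖P p.1 p.2.1 p.2.2‖ ^ 2 * jp d p.2.2 ^ (-(2 * (σ - m))) := by
  refine ⟨(64:ℝ) ^ τ, Real.rpow_pos_of_pos (by norm_num) τ, ?_⟩
  intro N hN ω lam P hMel hP
  have hNpos : (0:ℝ) < N := lt_of_lt_of_le one_pos hN
  set c0 : ℝ := (64:ℝ) ^ τ * γ ^ (-(2:ℝ)) * N ^ (4*τ) with hc0
  have hkey : ∀ p : (Fin n → ℤ) × (Fin d → ℤ) × (Fin d → ℤ),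
      jp n p.1 ^ (2 * s) * jp d p.2.1 ^ (2 * (σ + m)) *
        ‖homSol n d N ω lam P p.1 p.2.1 p.2.2‖ ^ 2 *
        jp d p.2.2 ^ (-(2 * (σ + m)))
      ≤ c0 * (jp n p.1 ^ (2 * s) * jp d p.2.1 ^ (2 * (σ + m)) *
          ‖P p.1 p.2.1 p.2.2‖ ^ 2 * jp d p.2.2 ^ (-(2 * (σ - m)))) := by
    intro p
    have := key_pointwise n d τ s σ m γ hγ hτ hm N hN ω lam P hMel p.1 p.2.1 p.2.2
    calc _ ≤ _ := this
    _ = c0 * (jp n p.1 ^ (2 * s) * jp d p.2.1 ^ (2 * (σ + m)) *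
          ‖P p.1 p.2.1 p.2.2‖ ^ 2 * jp d p.2.2 ^ (-(2 * (σ - m)))) := by
        rw [hc0]
  have hnonneg : ∀ p : (Fin n → ℤ) × (Fin d → ℤ) × (Fin d → ℤ),
      0 ≤ jp n p.1 ^ (2 * s) * jp d p.2.1 ^ (2 * (σ + m)) *
        ‖homSol n d N ω lam P p.1 p.2.1 p.2.2‖ ^ 2 *
        jp d p.2.2 ^ (-(2 * (σ + m))) := by
    intro p
    have h1 := jp_pos n p.1
    have h2 := jp_pos d p.2.1
    have h3 := jp_pos d p.2.2
    positivity
  have hsum : Summable (fun p : (Fin n → ℤ) × (Fin d → ℤ) × (Fin d → ℤ) =>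
      jp n p.1 ^ (2 * s) * jp d p.2.1 ^ (2 * (σ + m)) *
        ‖homSol n d N ω lam P p.1 p.2.1 p.2.2‖ ^ 2 *
        jp d p.2.2 ^ (-(2 * (σ + m)))) :=
    Summable.of_nonneg_of_le hnonneg hkey (hP.mul_left c0)
  calc (∑' p : (Fin n → ℤ) × (Fin d → ℤ) × (Fin d → ℤ),
          jp n p.1 ^ (2 * s) * jp d p.2.1 ^ (2 * (σ + m)) *
            ‖homSol n d N ω lam P p.1 p.2.1 p.2.2‖ ^ 2 *
            jp d p.2.2 ^ (-(2 * (σ + m))))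
      ≤ ∑' p : (Fin n → ℤ) × (Fin d → ℤ) × (Fin d → ℤ),
          c0 * (jp n p.1 ^ (2 * s) * jp d p.2.1 ^ (2 * (σ + m)) *
            ‖P p.1 p.2.1 p.2.2‖ ^ 2 * jp d p.2.2 ^ (-(2 * (σ - m)))) :=
        Summable.tsum_le_tsum hkey hsum (hP.mul_left c0)
  _ = c0 * ∑' p : (Fin n → ℤ) × (Fin d → ℤ) × (Fin d → ℤ),
        jp n p.1 ^ (2 * s) * jp d p.2.1 ^ (2 * (σ + m)) *
          ‖P p.1 p.2.1 p.2.2‖ ^ 2 * jp d p.2.2 ^ (-(2 * (σ - m))) := tsum_mul_left
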